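/- Let n = 2k and F^i(x) = x^{2^i} h(Tr^n_k(x)) where h : F_{2^k} → F_{2^k} is not a permutation. Then F^i has no bent components: for every nonzero α ∈ F_{2^n}, the function x ↦ Tr^n_1(αF^i(x)) is not bent. -/

import Mathlib

/-!
Let `S = F_{2^k}` be the fixed field of `x ↦ x ^ 2 ^ k` and `T x = x + x ^ 2 ^ k`, which is
constant on the cosets of `S`. Writing `β = φ⁻¹ δ` with `φ x = x ^ 2 ^ i`, on a coset `x + S` the
function `tr (α x^{2^i} h(T x)) + tr (β x)` differs from its value at `x` by the linear form
`u ↦ tr (z u)` with `z = φ⁻¹ (α h(T x) + δ)`. Since `S` is its own orthogonal for the trace form,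
each coset sum vanishes once `α h(c) + δ ∉ S` for all `c ∈ S`. Such a `δ` exists: any `δ ∉ S`
if `α ∈ S`, and `δ = -α γ` with `γ ∈ S \ h(S)` otherwise. So the Walsh transform vanishes at `β`.
-/

open Finset

def chr (b : ZMod 2) : ℤ := if b = 0 then 1 else -1

variable {K : Type*} [Field K] [Fintype K] [Algebra (ZMod 2) K]

/-- The absolute trace `Tr^n_1 : F_{2^n} → F_2`. -/
noncomputable def tr (x : K) : ZMod 2 := Algebra.trace (ZMod 2) K x

/-- The Walsh transform of a Boolean function `f` on `K = F_{2^n}`. -/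
noncomputable def walshF (f : K → ZMod 2) (l : K) : ℤ :=
  ∑ x, chr (f x + tr (l * x))

/-- `f` is bent on `K = F_{2^{2k}}`: all Walsh values are `±2^k`. -/
def IsBentF (k : ℕ) (f : K → ZMod 2) : Prop :=
  ∀ l : K, walshF f l = 2 ^ k ∨ walshF f l = -(2 ^ k)

open Polynomial

instance {F : Type*} [Field F] [Algebra (ZMod 2) F] : CharP F 2 :=
  charP_of_injective_algebraMap' (ZMod 2) 2

theorem chr_add (a b : ZMod 2) : chr (a + b) = chr a * chr b := by
  revert a b; decide

theorem sum_chr_eq_zero {G : Type*} [AddGroup G] [Fintype G] {φ : G → ZMod 2}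
    (hφ : ∀ a b, φ (a + b) = φ a + φ b) {a₀ : G} (ha₀ : φ a₀ ≠ 0) : ∑ a, chr (φ a) = 0 := by
  have hchr : chr (φ a₀) = -1 := by revert ha₀; generalize φ a₀ = b; revert b; decide
  have hshift : ∑ a, chr (φ (a + a₀)) = ∑ a, chr (φ a) :=
    Fintype.sum_equiv (Equiv.addRight a₀) _ _ fun _ => rfl
  simp only [hφ, chr_add, hchr, mul_neg_one, sum_neg_distrib] at hshift
  linarith

abbrev fixedSubfield (F : Type*) [Field F] (p k : ℕ) [ExpChar F p] : Subfield F :=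
  (iterateFrobenius F p k).eqLocusField (RingHom.id F)

section fixedSubfield

variable {F : Type*} [Field F] {p k : ℕ} [ExpChar F p]

theorem mem_fixedSubfield {x : F} : x ∈ fixedSubfield F p k ↔ x ^ p ^ k = x := Iff.rfl

theorem map_mem_fixedSubfield_iff (e : F ≃+* F) {x : F} :
    e x ∈ fixedSubfield F p k ↔ x ∈ fixedSubfield F p k := by
  simp only [mem_fixedSubfield, ← map_pow, e.injective.eq_iff]

theorem fixedSubfield_ne_top [Fintype F] (hq : 1 < p ^ k) (hcard : p ^ k < Fintype.card F) :
    fixedSubfield F p k ≠ ⊤ := by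
  intro htop
  have hroots : (univ : Finset F).val ⊆ (X ^ p ^ k - X : F[X]).roots :=
    fun x _ => by
      have hx : x ^ p ^ k = x := mem_fixedSubfield.1 (htop ▸ Subfield.mem_top x)
      simp [mem_roots (FiniteField.X_pow_card_sub_X_ne_zero F hq), hx]
  have := card_le_degree_of_subset_roots hroots
  rw [FiniteField.X_pow_card_sub_X_natDegree_eq F hq, card_univ] at this
  omega

end fixedSubfield

theorem Subfield.exists_mul_add_notMem {F : Type*} [Field F] {S : Subfield F} (hS : S ≠ ⊤)
    {h : F → F} (hmaps : ∀ c ∈ S, h c ∈ S) {γ : F} (hγ : γ ∈ S) (hγh : ∀ c ∈ S, h c ≠ γ)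
    (α : F) : ∃ δ, ∀ c ∈ S, α * h c + δ ∉ S := by
  by_cases hα : α ∈ S
  · obtain ⟨β, hβ⟩ : ∃ β, β ∉ S := by
      by_contra! hall
      exact hS (eq_top_iff.2 fun x _ => hall x)
    refine ⟨β, fun c hc hmem => hβ ?_⟩
    simpa using S.sub_mem hmem (S.mul_mem hα (hmaps c hc))
  · refine ⟨-(α * γ), fun c hc hmem => hα ?_⟩
    have hne : h c - γ ≠ 0 := sub_ne_zero.2 (hγh c hc)
    have hprod : α * (h c - γ) ∈ S := by rwa [mul_sub, sub_eq_add_neg]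
    simpa [hne] using S.mul_mem hprod (S.inv_mem (S.sub_mem (hmaps c hc) hγ))

theorem tr_add {F : Type*} [Field F] [Algebra (ZMod 2) F] (x y : F) :
    tr (x + y) = tr x + tr y :=
  map_add _ x y

theorem tr_pow_two_pow (i : ℕ) (x : K) : tr (x ^ 2 ^ i) = tr x := by
  have hσ : ⇑(FiniteField.frobeniusAlgEquivOfAlgebraic (ZMod 2) K ^ i) = (· ^ 2 ^ i) := by
    rw [AlgEquiv.coe_pow, FiniteField.coe_frobeniusAlgEquivOfAlgebraic_iterate, ZMod.card]
  simpa only [tr, hσ] using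
    Algebra.trace_eq_of_algEquiv (FiniteField.frobeniusAlgEquivOfAlgebraic (ZMod 2) K ^ i) x

theorem tr_iterateFrobeniusEquiv_symm_mul (i : ℕ) (w y : K) :
    tr ((iterateFrobeniusEquiv K 2 i).symm w * y) = tr (w * y ^ 2 ^ i) := by
  rw [← tr_pow_two_pow i, mul_pow, ← iterateFrobeniusEquiv_def, RingEquiv.apply_symm_apply]

theorem eq_zero_of_forall_tr_mul_eq_zero {a : K} (ha : ∀ b, tr (a * b) = 0) : a = 0 :=
  (traceForm_nondegenerate (ZMod 2) K).1 a fun b => by simpa [tr] using ha b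

theorem sum_chr_eq_zero_of_forall_add_mem (S : AddSubgroup K) [Fintype S] (g : K → ZMod 2)
    (z : K → K) (hg : ∀ x, ∀ u ∈ S, g (x + u) = g x + tr (z x * u))
    (hz : ∀ x, ∃ u ∈ S, tr (z x * u) ≠ 0) : ∑ x, chr (g x) = 0 := by
  have hfiber : ∀ x, ∑ u : S, chr (g (x + u)) = 0 := fun x => by
    obtain ⟨u₀, hu₀, hne⟩ := hz x
    simp only [hg x _ (SetLike.coe_mem _), chr_add, ← mul_sum]
    rw [sum_chr_eq_zero (φ := fun u : S => tr (z x * u))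
      (fun u v => by simp only [AddSubgroup.coe_add, mul_add, tr_add]) (a₀ := ⟨u₀, hu₀⟩) hne,
      mul_zero]
  have hshift : ∀ u : S, ∑ x, chr (g (x + u)) = ∑ x, chr (g x) := fun u =>
    Fintype.sum_equiv (Equiv.addRight (u : K)) _ _ fun _ => rfl
  have : (Fintype.card S : ℤ) * ∑ x, chr (g x) = 0 := by
    calc (Fintype.card S : ℤ) * ∑ x, chr (g x) = ∑ u : S, ∑ x, chr (g (x + u)) := by
          simp [hshift]
      _ = 0 := by rw [sum_comm]; simp [hfiber]
  simpa [Fintype.card_ne_zero] using this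

theorem pow_two_pow_two_pow {F : Type*} [Field F] [Fintype F] {k : ℕ}
    (hcard : Fintype.card F = 2 ^ (2 * k)) (x : F) : (x ^ 2 ^ k) ^ 2 ^ k = x := by
  rw [← pow_mul, ← pow_add, ← two_mul, ← hcard, FiniteField.pow_card]

theorem add_pow_two_pow_mem_fixedSubfield {F : Type*} [Field F] [Fintype F] [CharP F 2] {k : ℕ}
    (hcard : Fintype.card F = 2 ^ (2 * k)) (x : F) : x + x ^ 2 ^ k ∈ fixedSubfield F 2 k := by
  rw [mem_fixedSubfield, add_pow_char_pow, pow_two_pow_two_pow hcard, add_comm]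

theorem exists_mem_fixedSubfield_tr_mul_ne_zero {k : ℕ} (hcard : Fintype.card K = 2 ^ (2 * k))
    {z : K} (hz : z ∉ fixedSubfield K 2 k) :
    ∃ u ∈ fixedSubfield K 2 k, tr (z * u) ≠ 0 := by
  by_contra! horth
  refine hz (mem_fixedSubfield.2 (CharTwo.add_eq_zero.1 ?_).symm)
  refine eq_zero_of_forall_tr_mul_eq_zero fun x => ?_
  calc tr ((z + z ^ 2 ^ k) * x) = tr (z * x) + tr ((z ^ 2 ^ k * x) ^ 2 ^ k) := by
        rw [add_mul, tr_add, tr_pow_two_pow]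
    _ = tr (z * (x + x ^ 2 ^ k)) := by
        rw [mul_pow, pow_two_pow_two_pow hcard, mul_add, tr_add]
    _ = 0 := horth _ (add_pow_two_pow_mem_fixedSubfield hcard x)

theorem add_pow_two_pow_add_of_mem {F : Type*} [Field F] [CharP F 2] {k : ℕ} {u : F}
    (hu : u ∈ fixedSubfield F 2 k) (x : F) :
    (x + u) + (x + u) ^ 2 ^ k = x + x ^ 2 ^ k := by
  rw [add_pow_char_pow, mem_fixedSubfield.1 hu, add_add_add_comm, CharTwo.add_self_eq_zero,
    add_zero]

theorem walshF_eq_zero {k : ℕ} (hcard : Fintype.card K = 2 ^ (2 * k)) (i : ℕ) {α δ : K}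
    {h : K → K} (hδ : ∀ c ∈ fixedSubfield K 2 k, α * h c + δ ∉ fixedSubfield K 2 k) :
    walshF (fun x => tr (α * (x ^ 2 ^ i * h (x + x ^ 2 ^ k))))
      ((iterateFrobeniusEquiv K 2 i).symm δ) = 0 := by
  classical
  refine sum_chr_eq_zero_of_forall_add_mem (fixedSubfield K 2 k).toAddSubgroup _
    (fun x => (iterateFrobeniusEquiv K 2 i).symm (α * h (x + x ^ 2 ^ k) + δ)) ?_ ?_
  · intro x u hu
    dsimp only
    rw [add_pow_two_pow_add_of_mem hu]
    simp only [tr_iterateFrobeniusEquiv_symm_mul, add_pow_char_pow, ← tr_add]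
    congr 1
    ring
  · intro x
    refine exists_mem_fixedSubfield_tr_mul_ne_zero hcard ?_
    rw [map_mem_fixedSubfield_iff]
    exact hδ _ (add_pow_two_pow_mem_fixedSubfield hcard x)

theorem stmt12 (k i : ℕ) (hk : 0 < k) (hcard : Fintype.card K = 2 ^ (2 * k))
    (h : K → K)
    (hsub : ∀ a : K, a ^ (2 ^ k) = a → (h a) ^ (2 ^ k) = h a)
    (hnotperm : ¬ Set.BijOn h {a : K | a ^ (2 ^ k) = a} {a : K | a ^ (2 ^ k) = a}) :
    ∀ α : K, α ≠ 0 →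
      ¬ IsBentF k (fun x => tr (α * (x ^ (2 ^ i) * h (x + x ^ (2 ^ k))))) := by
  intro α _ hbent
  obtain ⟨γ, hγ, hγh⟩ : ∃ γ ∈ fixedSubfield K 2 k, ∀ c ∈ fixedSubfield K 2 k, h c ≠ γ := by
    have hsurj := mt ((Set.toFinite _).surjOn_iff_bijOn_of_mapsTo hsub).1 hnotperm
    obtain ⟨γ, hγ, hγh⟩ := Set.not_subset.1 hsurj
    exact ⟨γ, hγ, fun c hc hcγ => hγh ⟨c, hc, hcγ⟩⟩
  have hne_top : fixedSubfield K 2 k ≠ ⊤ := fixedSubfield_ne_top (Nat.one_lt_two_pow hk.ne')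
    (by rw [hcard]; exact Nat.pow_lt_pow_right one_lt_two (by omega))
  obtain ⟨δ, hδ⟩ := (fixedSubfield K 2 k).exists_mul_add_notMem hne_top hsub hγ hγh α
  have hpos : (0 : ℤ) < 2 ^ k := by positivity
  rcases hbent ((iterateFrobeniusEquiv K 2 i).symm δ) with hW | hW <;>
    rw [walshF_eq_zero hcard i hδ] at hW <;> linarith
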